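/- arXiv:1908.05089 — 4 statements merged into one kernel-verified Lean document; each statement's English description precedes it below -/
import Mathlib

section
/- Let α_s, α_c, β, μ ∈ ℝ, set ξ₁ := α_s − α_c − β and ξ₂ := α_s + α_c − β with ξ₁ ≠ 0 and ξ₂ ≠ 0, let M be the 2×2 matrix with rows (α_s − β, α_c) and (α_c, α_s − β), and let λ₀ := μβ/(β − α_s − α_c). Suppose u : ℝ → ℝ² is differentiable, u(0) = (λ₀², λ₀²), and u′(t) = 2M·u(t) + λ₀·(α_s² + α_c² + 2βμ, 2(α_sα_c + βμ)) for all t ≥ 0. Then for all t ≥ 0, u(t) = c₁·e^{2ξ₁t}·(−1, 1) + c₂·e^{2ξ₂t}·(1, 1) − (λ₀/2)·M⁻¹·(α_s² + α_c² + 2βμ, 2(α_sα_c + βμ)), where c₁ = −λ₀(α_s − α_c)²/(4ξ₁) and c₂ = λ₀(α_s + α_c)²/(4ξ₂). -/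
/-!
The vectors `(-1, 1)` and `(1, 1)` are eigenvectors of `M` with eigenvalues `ξ₁` and `ξ₂`, and
`-(λ₀/2) M⁻¹ b` is the equilibrium of `u' = 2 M u + λ₀ b`. So the claimed right-hand side, two
exponential eigenmodes shifted by that equilibrium, solves the same ODE; `c₁` and `c₂` are chosen
so that it starts at `(λ₀², λ₀²)`, which is where `λ₀ ξ₂ = -μ β` enters. The vector field is
Lipschitz, so the two solutions agree for all `t ≥ 0`.
-/

open Matrix

theorem eq_of_hasDerivAt_of_lipschitzWith {E : Type*} [NormedAddCommGroup E] [NormedSpace ℝ E]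
    {v : E → E} {K : NNReal} (hv : LipschitzWith K v) {f g : ℝ → E}
    (hf : ∀ t ≥ (0 : ℝ), HasDerivAt f (v (f t)) t)
    (hg : ∀ t ≥ (0 : ℝ), HasDerivAt g (v (g t)) t) (h0 : f 0 = g 0) :
    ∀ t ≥ (0 : ℝ), f t = g t := fun _ ht ↦
  ODE_solution_unique (v := fun _ ↦ v) (fun _ ↦ hv)
    (fun s hs ↦ (hf s hs.1).continuousAt.continuousWithinAt)
    (fun s hs ↦ (hf s hs.1).hasDerivWithinAt)
    (fun s hs ↦ (hg s hs.1).continuousAt.continuousWithinAt)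
    (fun s hs ↦ (hg s hs.1).hasDerivWithinAt) h0 ⟨ht, le_rfl⟩

namespace Matrix

variable {n : Type*} [Fintype n]

theorem exists_lipschitzWith_smul_mulVec_add [DecidableEq n] (M : Matrix n n ℝ) (a : ℝ)
    (b : n → ℝ) : ∃ K, LipschitzWith K (fun x ↦ a • M *ᵥ x + b) := by
  let A : (n → ℝ) →L[ℝ] (n → ℝ) := a • LinearMap.toContinuousLinearMap (toLin' M)
  have hA : (fun x ↦ a • M *ᵥ x + b) = fun x ↦ A x + b := by
    funext x; simp [A]
  exact ⟨_, hA ▸ A.lipschitz.add (LipschitzWith.const b)⟩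

theorem hasDerivAt_exp_smul_of_mulVec_eq_smul {M : Matrix n n ℝ} {e : n → ℝ} {ξ : ℝ}
    (he : M *ᵥ e = ξ • e) (a c t : ℝ) :
    HasDerivAt (fun t ↦ (c * Real.exp (a * ξ * t)) • e)
      (a • M *ᵥ ((c * Real.exp (a * ξ * t)) • e)) t := by
  have h := (((hasDerivAt_id t).const_mul (a * ξ)).exp.const_mul c).smul_const e
  refine h.congr_deriv ?_
  rw [mulVec_smul, he, smul_smul, smul_smul, id, mul_one]
  ring_nf

theorem hasDerivAt_eigenmodes_sub_equilibrium {M : Matrix n n ℝ} {e₁ e₂ p b : n → ℝ}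
    {ξ₁ ξ₂ : ℝ} (he₁ : M *ᵥ e₁ = ξ₁ • e₁) (he₂ : M *ᵥ e₂ = ξ₂ • e₂) {a : ℝ}
    (hp : a • M *ᵥ p = b) (c₁ c₂ t : ℝ) :
    HasDerivAt
      (fun t ↦ (c₁ * Real.exp (a * ξ₁ * t)) • e₁ + (c₂ * Real.exp (a * ξ₂ * t)) • e₂ - p)
      (a • M *ᵥ ((c₁ * Real.exp (a * ξ₁ * t)) • e₁ + (c₂ * Real.exp (a * ξ₂ * t)) • e₂ - p)
        + b) t := by
  refine ((hasDerivAt_exp_smul_of_mulVec_eq_smul he₁ a c₁ t).add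
    (hasDerivAt_exp_smul_of_mulVec_eq_smul he₂ a c₂ t)).sub_const p |>.congr_deriv ?_
  rw [mulVec_sub, mulVec_add, smul_sub, smul_add, hp, sub_add_cancel]

variable {R : Type*} [CommRing R]

theorem fin_two_symm_mulVec_neg_one_one (a b : R) :
    !![a, b; b, a] *ᵥ ![-1, 1] = (a - b) • ![-1, 1] := by
  ext i; fin_cases i <;> simp [mulVec, dotProduct, Fin.sum_univ_two, neg_add_eq_sub]

theorem fin_two_symm_mulVec_one_one (a b : R) :
    !![a, b; b, a] *ᵥ ![1, 1] = (a + b) • ![1, 1] := by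
  ext i; fin_cases i <;> simp [mulVec, dotProduct, add_comm]

end Matrix

theorem symmetric_hawkes_mulVec_initial_offset (αs αc β μ ξ₁ ξ₂ lam₀ c₁ c₂ : ℝ)
    (hξ₁ : ξ₁ = αs - αc - β) (hξ₂ : ξ₂ = αs + αc - β) (hξ₁0 : ξ₁ ≠ 0) (hξ₂0 : ξ₂ ≠ 0)
    (hlam₀ : lam₀ = μ * β / (β - αs - αc))
    (hc₁ : c₁ = -(lam₀ * (αs - αc) ^ 2) / (4 * ξ₁))
    (hc₂ : c₂ = lam₀ * (αs + αc) ^ 2 / (4 * ξ₂)) :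
    !![αs - β, αc; αc, αs - β] *ᵥ
        (c₁ • ![(-1 : ℝ), 1] + c₂ • ![(1 : ℝ), 1] - ![lam₀ ^ 2, lam₀ ^ 2])
      = (lam₀ / 2) • ![αs ^ 2 + αc ^ 2 + 2 * β * μ, 2 * (αs * αc + β * μ)] := by
  have hc₁ξ₁ : c₁ * ξ₁ = -(lam₀ * (αs - αc) ^ 2) / 4 := by rw [hc₁]; field_simp
  have hc₂ξ₂ : c₂ * ξ₂ = lam₀ * (αs + αc) ^ 2 / 4 := by rw [hc₂]; field_simp
  have hlam₀ξ₂ : lam₀ * ξ₂ = -(μ * β) := by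
    have : β - αs - αc ≠ 0 := by rw [← neg_ne_zero]; convert hξ₂ ▸ hξ₂0 using 1; ring
    rw [hlam₀, hξ₂]; field_simp; ring
  rw [mulVec_fin_two]
  ext i
  fin_cases i <;> simp only [Fin.zero_eta, Fin.mk_one, of_apply, cons_val', cons_val_zero,
    cons_val_one, cons_val_fin_one, Pi.sub_apply, Pi.add_apply, Pi.smul_apply, smul_eq_mul]
  · linear_combination -hc₁ξ₁ + hc₂ξ₂ - lam₀ * hlam₀ξ₂ + c₁ * hξ₁ - (c₂ - lam₀ ^ 2) * hξ₂
  · linear_combination hc₁ξ₁ + hc₂ξ₂ - lam₀ * hlam₀ξ₂ - c₁ * hξ₁ - (c₂ - lam₀ ^ 2) * hξ₂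

/-- Explicit solution of the ODE system satisfied by
`(E[λ₁²(t)], E[λ₁(t)λ₂(t)])` for the symmetric Hawkes model started in its
stationary state (Lemma 2 of the appendix). -/
theorem symmetric_hawkes_second_moment_intensity
    (αs αc β μ : ℝ)
    (ξ₁ ξ₂ : ℝ) (hξ₁ : ξ₁ = αs - αc - β) (hξ₂ : ξ₂ = αs + αc - β)
    (hξ₁0 : ξ₁ ≠ 0) (hξ₂0 : ξ₂ ≠ 0)
    (M : Matrix (Fin 2) (Fin 2) ℝ) (hM : M = !![αs - β, αc; αc, αs - β])
    (lam₀ : ℝ) (hlam₀ : lam₀ = μ * β / (β - αs - αc))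
    (c₁ c₂ : ℝ)
    (hc₁ : c₁ = -(lam₀ * (αs - αc) ^ 2) / (4 * ξ₁))
    (hc₂ : c₂ = lam₀ * (αs + αc) ^ 2 / (4 * ξ₂))
    (u : ℝ → Fin 2 → ℝ)
    (hu0 : u 0 = ![lam₀ ^ 2, lam₀ ^ 2])
    (hu : ∀ t ≥ (0 : ℝ), HasDerivAt u
      ((2 : ℝ) • M.mulVec (u t)
        + lam₀ • ![αs ^ 2 + αc ^ 2 + 2 * β * μ, 2 * (αs * αc + β * μ)]) t) :
    ∀ t ≥ (0 : ℝ),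
      u t = (c₁ * Real.exp (2 * ξ₁ * t)) • ![(-1 : ℝ), 1]
          + (c₂ * Real.exp (2 * ξ₂ * t)) • ![(1 : ℝ), 1]
          - (lam₀ / 2) • M⁻¹.mulVec
              ![αs ^ 2 + αc ^ 2 + 2 * β * μ, 2 * (αs * αc + β * μ)] := by
  set w : Fin 2 → ℝ := ![αs ^ 2 + αc ^ 2 + 2 * β * μ, 2 * (αs * αc + β * μ)]
  have he₁ : M *ᵥ ![-1, 1] = ξ₁ • ![-1, 1] := by
    rw [hM, fin_two_symm_mulVec_neg_one_one, hξ₁, sub_right_comm]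
  have he₂ : M *ᵥ ![1, 1] = ξ₂ • ![1, 1] := by
    rw [hM, fin_two_symm_mulVec_one_one, hξ₂, add_sub_right_comm]
  have hdet : IsUnit M.det := by
    have h : M.det = ξ₁ * ξ₂ := by rw [hM, det_fin_two_of, hξ₁, hξ₂]; ring
    exact h ▸ (mul_ne_zero hξ₁0 hξ₂0).isUnit
  have hequil : (lam₀ / 2) • M⁻¹ *ᵥ w = c₁ • ![-1, 1] + c₂ • ![1, 1] - u 0 := by
    have := M.invertibleOfIsUnitDet hdet
    rw [← mulVec_smul]
    refine inv_mulVec_eq_vec ?_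
    rw [hu0, hM]
    exact (symmetric_hawkes_mulVec_initial_offset αs αc β μ ξ₁ ξ₂ lam₀ c₁ c₂
      hξ₁ hξ₂ hξ₁0 hξ₂0 hlam₀ hc₁ hc₂).symm
  have hstat : (2 : ℝ) • M *ᵥ ((lam₀ / 2) • M⁻¹ *ᵥ w) = lam₀ • w := by
    rw [mulVec_smul, mulVec_mulVec, mul_nonsing_inv _ hdet, one_mulVec, smul_smul,
      mul_div_cancel₀ _ two_ne_zero]
  obtain ⟨K, hK⟩ := exists_lipschitzWith_smul_mulVec_add M 2 (lam₀ • w)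
  refine eq_of_hasDerivAt_of_lipschitzWith hK hu
    (fun t _ ↦ hasDerivAt_eigenmodes_sub_equilibrium he₁ he₂ hstat c₁ c₂ t) ?_
  simp only [mul_zero, Real.exp_zero, mul_one, hequil, sub_sub_cancel]
end

section
/- Let α_s, α_c, β, μ ∈ ℝ, set ξ₁ := α_s − α_c − β and ξ₂ := α_s + α_c − β with ξ₁ ≠ 0 and ξ₂ ≠ 0, let M be the 2×2 matrix with rows (α_s − β, α_c) and (α_c, α_s − β), let λ₀ := μβ/(β − α_s − α_c), and let u : ℝ → ℝ² be the function u(t) = c₁·e^{2ξ₁t}·(−1, 1) + c₂·e^{2ξ₂t}·(1, 1) − (λ₀/2)·M⁻¹·(α_s² + α_c² + 2βμ, 2(α_sα_c + βμ)) with c₁ = −λ₀(α_s − α_c)²/(4ξ₁) and c₂ = λ₀(α_s + α_c)²/(4ξ₂). Suppose v : ℝ → ℝ² is differentiable, v(0) = (0, 0), and v′(t) = M·v(t) + (α_sλ₀ + u₁(t) + βμλ₀t, α_cλ₀ + u₂(t) + βμλ₀t) for all t ≥ 0. Then for all t ≥ 0, v(t) = d₁·e^{ξ₁t}·(−1, 1)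 + d₂·e^{ξ₂t}·(1, 1) + (c₁/ξ₁)·e^{2ξ₁t}·(−1, 1) + (c₂/ξ₂)·e^{2ξ₂t}·(1, 1) − λ₀·(βμ·M⁻¹·(1, 1)·t + M⁻¹·(α_s, α_c) − (1/2)·(M⁻¹)²·(α_s² + α_c², 2α_sα_c)), where d₁ = λ₀(α_s − α_c)β/(2ξ₁²) and d₂ = −λ₀(α_s + α_c)β/(2ξ₂²). -/
/-!
The vectors `(-1, 1)` and `(1, 1)` are eigenvectors of `M` for `ξ₁` and `ξ₂`. Hence each term
`d e^{ξ t}` of the claimed solution is a homogeneous solution, each term `(c/ξ) e^{2ξ t}` absorbs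
the matching exponential part of `u`, and the affine term absorbs the rest of the forcing, using
only `M M⁻¹ = 1`. Expanding the initial vector in the eigenbasis shows that `d₁, d₂` make the
claimed solution vanish at `0`, and an affine ODE with a bounded linear part has unique solutions.
-/

open Matrix

theorem ODE_solution_unique_affine_Ici {E : Type*} [NormedAddCommGroup E] [NormedSpace ℝ E]
    {A : E →L[ℝ] E} {f v w : ℝ → E} {a : ℝ}
    (hv : ∀ t ≥ a, HasDerivAt v (A (v t) + f t) t)
    (hw : ∀ t ≥ a, HasDerivAt w (A (w t) + f t) t) (ha : v a = w a) :
    ∀ t ≥ a, v t = w t := by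
  have hlip (t : ℝ) : LipschitzWith ‖A‖₊ (fun x => A x + f t) :=
    LipschitzWith.of_dist_le_mul fun x y => by
      simpa only [dist_add_right] using A.lipschitz.dist_le_mul x y
  intro t ht
  exact ODE_solution_unique hlip (HasDerivAt.continuousOn fun s hs => hv s hs.1)
    (fun s hs => (hv s hs.1).hasDerivWithinAt) (HasDerivAt.continuousOn fun s hs => hw s hs.1)
    (fun s hs => (hw s hs.1).hasDerivWithinAt) ha ⟨ht, le_rfl⟩

theorem Matrix.inv_mulVec_eq_inv_smul_of_mulVec_eq_smul {n K : Type*} [Fintype n]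
    [DecidableEq n] [Field K] {M : Matrix n n K} {e : n → K} {ξ : K} (hM : IsUnit M.det)
    (h : M *ᵥ e = ξ • e) : M⁻¹ *ᵥ e = ξ⁻¹ • e := by
  have he : ξ • (M⁻¹ *ᵥ e) = e := by
    rw [← mulVec_smul, ← h, mulVec_mulVec, nonsing_inv_mul _ hM, one_mulVec]
  rcases eq_or_ne ξ 0 with rfl | hξ
  · rw [zero_smul] at he
    simp [← he]
  · rw [← inv_smul_smul₀ hξ (M⁻¹ *ᵥ e), he]

theorem hasDerivAt_mul_exp_smul {F : Type*} [NormedAddCommGroup F] [NormedSpace ℝ F]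
    (c r t : ℝ) (x : F) :
    HasDerivAt (fun s => (c * Real.exp (r * s)) • x) ((c * r * Real.exp (r * t)) • x) t := by
  refine ((((hasDerivAt_id' t).const_mul r).exp.const_mul c).smul_const x).congr_deriv ?_
  ring_nf

section Eigenvector

variable {n : Type*} [Fintype n] {M : Matrix n n ℝ} {e : n → ℝ} {ξ : ℝ}

theorem hasDerivAt_mul_exp_smul_of_mulVec_eq_smul (h : M *ᵥ e = ξ • e) (c t : ℝ) :
    HasDerivAt (fun s => (c * Real.exp (ξ * s)) • e) (M *ᵥ ((c * Real.exp (ξ * t)) • e)) t := by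
  refine (hasDerivAt_mul_exp_smul c ξ t e).congr_deriv ?_
  rw [mulVec_smul, h, smul_smul]
  ring_nf

theorem hasDerivAt_div_mul_exp_two_mul_smul_of_mulVec_eq_smul (h : M *ᵥ e = ξ • e)
    (hξ : ξ ≠ 0) (c t : ℝ) :
    HasDerivAt (fun s => (c / ξ * Real.exp (2 * ξ * s)) • e)
      (M *ᵥ ((c / ξ * Real.exp (2 * ξ * t)) • e) + (c * Real.exp (2 * ξ * t)) • e) t := by
  refine (hasDerivAt_mul_exp_smul (c / ξ) (2 * ξ) t e).congr_deriv ?_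
  rw [mulVec_smul, h, smul_smul, ← add_smul]
  congr 1
  field_simp
  ring

end Eigenvector

theorem hasDerivAt_affine_inv_mulVec {n : Type*} [Fintype n] [DecidableEq n]
    {M : Matrix n n ℝ} (hM : IsUnit M.det) (κ : ℝ) (w a z : n → ℝ) (t : ℝ) :
    HasDerivAt (fun s => (κ * s) • M⁻¹ *ᵥ w + M⁻¹ *ᵥ a - (1 / 2 : ℝ) • (M⁻¹ * M⁻¹) *ᵥ z)
      (M *ᵥ ((κ * t) • M⁻¹ *ᵥ w + M⁻¹ *ᵥ a - (1 / 2 : ℝ) • (M⁻¹ * M⁻¹) *ᵥ z)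
        - ((κ * t) • w + a - (1 / 2 : ℝ) • M⁻¹ *ᵥ (z + (2 * κ) • w))) t := by
  have hMM (x : n → ℝ) : M *ᵥ M⁻¹ *ᵥ x = x := by
    rw [mulVec_mulVec, mul_nonsing_inv _ hM, one_mulVec]
  have hMMM (x : n → ℝ) : M *ᵥ (M⁻¹ * M⁻¹) *ᵥ x = M⁻¹ *ᵥ x := by
    rw [← mulVec_mulVec, hMM]
  refine ((((hasDerivAt_id' t).const_mul κ).smul_const (M⁻¹ *ᵥ w)).add_const (M⁻¹ *ᵥ a)
    |>.sub_const ((1 / 2 : ℝ) • (M⁻¹ * M⁻¹) *ᵥ z)).congr_deriv ?_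
  simp only [mulVec_add, mulVec_sub, mulVec_smul, hMM, hMMM]
  module

theorem Matrix.of_fin_two_symm_mulVec_neg_one_one {R : Type*} [CommRing R] (a b : R) :
    !![a, b; b, a] *ᵥ ![-1, 1] = (a - b) • ![-1, 1] := by
  ext i; fin_cases i <;> simp [mulVec, dotProduct] <;> ring

theorem Matrix.of_fin_two_symm_mulVec_one_one {R : Type*} [CommRing R] (a b : R) :
    !![a, b; b, a] *ᵥ ![1, 1] = (a + b) • ![1, 1] := by
  ext i; fin_cases i <;> simp [mulVec, dotProduct, add_comm]

theorem vec2_eq_smul_one_one_add_smul_neg_one_one (x y : ℝ) :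
    ![x, y] = ((x + y) / 2) • ![1, 1] + ((y - x) / 2) • ![-1, 1] := by
  ext i; fin_cases i <;> simp <;> ring

theorem hasDerivAt_exp_eigen_sub_smul_affine {n : Type*} [Fintype n] [DecidableEq n]
    {M : Matrix n n ℝ} (hM : IsUnit M.det) {e₁ e₂ : n → ℝ} {ξ₁ ξ₂ : ℝ}
    (h₁ : M *ᵥ e₁ = ξ₁ • e₁) (h₂ : M *ᵥ e₂ = ξ₂ • e₂) (hξ₁ : ξ₁ ≠ 0) (hξ₂ : ξ₂ ≠ 0)
    (c₁ c₂ d₁ d₂ κ l : ℝ) (w a z : n → ℝ) (t : ℝ) :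
    HasDerivAt (fun s => (d₁ * Real.exp (ξ₁ * s)) • e₁ + (d₂ * Real.exp (ξ₂ * s)) • e₂
        + (c₁ / ξ₁ * Real.exp (2 * ξ₁ * s)) • e₁ + (c₂ / ξ₂ * Real.exp (2 * ξ₂ * s)) • e₂
        - l • ((κ * s) • M⁻¹ *ᵥ w + M⁻¹ *ᵥ a - (1 / 2 : ℝ) • (M⁻¹ * M⁻¹) *ᵥ z))
      (M *ᵥ ((d₁ * Real.exp (ξ₁ * t)) • e₁ + (d₂ * Real.exp (ξ₂ * t)) • e₂
        + (c₁ / ξ₁ * Real.exp (2 * ξ₁ * t)) • e₁ + (c₂ / ξ₂ * Real.exp (2 * ξ₂ * t)) • e₂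
        - l • ((κ * t) • M⁻¹ *ᵥ w + M⁻¹ *ᵥ a - (1 / 2 : ℝ) • (M⁻¹ * M⁻¹) *ᵥ z))
        + (l • a + (κ * l * t) • w + ((c₁ * Real.exp (2 * ξ₁ * t)) • e₁
          + (c₂ * Real.exp (2 * ξ₂ * t)) • e₂ - (l / 2) • M⁻¹ *ᵥ (z + (2 * κ) • w)))) t := by
  refine ((((hasDerivAt_mul_exp_smul_of_mulVec_eq_smul h₁ d₁ t).add
    (hasDerivAt_mul_exp_smul_of_mulVec_eq_smul h₂ d₂ t)).add
    (hasDerivAt_div_mul_exp_two_mul_smul_of_mulVec_eq_smul h₁ hξ₁ c₁ t)).add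
    (hasDerivAt_div_mul_exp_two_mul_smul_of_mulVec_eq_smul h₂ hξ₂ c₂ t)).sub
    ((hasDerivAt_affine_inv_mulVec hM κ w a z t).const_smul l) |>.congr_deriv ?_
  simp only [mulVec_add, mulVec_sub, mulVec_smul]
  module

theorem symmetric_hawkes_solution_zero {M : Matrix (Fin 2) (Fin 2) ℝ} (hM : IsUnit M.det)
    {αs αc β l ξ₁ ξ₂ c₁ c₂ d₁ d₂ : ℝ} (hξ₁ : ξ₁ = αs - αc - β) (hξ₂ : ξ₂ = αs + αc - β)
    (hξ₁0 : ξ₁ ≠ 0) (hξ₂0 : ξ₂ ≠ 0)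
    (h₁ : M *ᵥ ![-1, 1] = ξ₁ • ![-1, 1]) (h₂ : M *ᵥ ![1, 1] = ξ₂ • ![1, 1])
    (hc₁ : c₁ = -(l * (αs - αc) ^ 2) / (4 * ξ₁))
    (hc₂ : c₂ = l * (αs + αc) ^ 2 / (4 * ξ₂))
    (hd₁ : d₁ = l * (αs - αc) * β / (2 * ξ₁ ^ 2))
    (hd₂ : d₂ = -(l * (αs + αc) * β) / (2 * ξ₂ ^ 2)) :
    d₁ • ![-1, 1] + d₂ • ![1, 1] + (c₁ / ξ₁) • ![-1, 1] + (c₂ / ξ₂) • ![(1 : ℝ), 1]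
      - l • (M⁻¹ *ᵥ ![αs, αc] - (1 / 2 : ℝ) • (M⁻¹ * M⁻¹) *ᵥ ![αs ^ 2 + αc ^ 2, 2 * (αs * αc)])
      = 0 := by
  rw [vec2_eq_smul_one_one_add_smul_neg_one_one αs αc,
    vec2_eq_smul_one_one_add_smul_neg_one_one (αs ^ 2 + αc ^ 2)]
  simp only [mulVec_add, mulVec_smul, ← mulVec_mulVec,
    inv_mulVec_eq_inv_smul_of_mulVec_eq_smul hM h₁, inv_mulVec_eq_inv_smul_of_mulVec_eq_smul hM h₂]
  subst hc₁ hc₂ hd₁ hd₂ hξ₁ hξ₂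
  ext i; fin_cases i <;> simp <;> field_simp <;> ring

theorem symmetric_hawkes_intensity_count_cross_moment_general
    (αs αc β μ : ℝ)
    (ξ₁ ξ₂ : ℝ) (hξ₁ : ξ₁ = αs - αc - β) (hξ₂ : ξ₂ = αs + αc - β)
    (hξ₁0 : ξ₁ ≠ 0) (hξ₂0 : ξ₂ ≠ 0)
    (M : Matrix (Fin 2) (Fin 2) ℝ) (hM : M = !![αs - β, αc; αc, αs - β])
    (lam₀ : ℝ)
    (c₁ c₂ d₁ d₂ : ℝ)
    (hc₁ : c₁ = -(lam₀ * (αs - αc) ^ 2) / (4 * ξ₁))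
    (hc₂ : c₂ = lam₀ * (αs + αc) ^ 2 / (4 * ξ₂))
    (hd₁ : d₁ = lam₀ * (αs - αc) * β / (2 * ξ₁ ^ 2))
    (hd₂ : d₂ = -(lam₀ * (αs + αc) * β) / (2 * ξ₂ ^ 2))
    (u : ℝ → Fin 2 → ℝ)
    (hu : ∀ t, u t = (c₁ * Real.exp (2 * ξ₁ * t)) • ![(-1 : ℝ), 1]
          + (c₂ * Real.exp (2 * ξ₂ * t)) • ![(1 : ℝ), 1]
          - (lam₀ / 2) • M⁻¹.mulVec
              ![αs ^ 2 + αc ^ 2 + 2 * β * μ, 2 * (αs * αc + β * μ)])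
    (v : ℝ → Fin 2 → ℝ)
    (hv0 : v 0 = 0)
    (hv : ∀ t ≥ (0 : ℝ), HasDerivAt v
      (M.mulVec (v t)
        + ![αs * lam₀ + u t 0 + β * μ * lam₀ * t,
            αc * lam₀ + u t 1 + β * μ * lam₀ * t]) t) :
    ∀ t ≥ (0 : ℝ),
      v t = (d₁ * Real.exp (ξ₁ * t)) • ![(-1 : ℝ), 1]
          + (d₂ * Real.exp (ξ₂ * t)) • ![(1 : ℝ), 1]
          + (c₁ / ξ₁ * Real.exp (2 * ξ₁ * t)) • ![(-1 : ℝ), 1]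
          + (c₂ / ξ₂ * Real.exp (2 * ξ₂ * t)) • ![(1 : ℝ), 1]
          - lam₀ • ((β * μ * t) • M⁻¹.mulVec ![(1 : ℝ), 1]
              + M⁻¹.mulVec ![αs, αc]
              - (1 / 2 : ℝ) • (M⁻¹ * M⁻¹).mulVec
                  ![αs ^ 2 + αc ^ 2, 2 * (αs * αc)]) := by
  have hMe₁ : M *ᵥ ![-1, 1] = ξ₁ • ![-1, 1] := by
    rw [hM, hξ₁, Matrix.of_fin_two_symm_mulVec_neg_one_one]; ring_nf
  have hMe₂ : M *ᵥ ![1, 1] = ξ₂ • ![1, 1] := by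
    rw [hM, hξ₂, Matrix.of_fin_two_symm_mulVec_one_one]; ring_nf
  have hdet : IsUnit M.det := by
    rw [hM, det_fin_two_of, isUnit_iff_ne_zero]
    convert mul_ne_zero hξ₁0 hξ₂0 using 1
    rw [hξ₁, hξ₂]; ring
  have hforcing (s : ℝ) : ![αs * lam₀ + u s 0 + β * μ * lam₀ * s,
      αc * lam₀ + u s 1 + β * μ * lam₀ * s] = lam₀ • ![αs, αc] + (β * μ * lam₀ * s) • ![1, 1]
        + ((c₁ * Real.exp (2 * ξ₁ * s)) • ![-1, 1] + (c₂ * Real.exp (2 * ξ₂ * s)) • ![1, 1]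
          - (lam₀ / 2) • M⁻¹ *ᵥ (![αs ^ 2 + αc ^ 2, 2 * (αs * αc)] + (2 * (β * μ)) • ![1, 1])) := by
    have hy : ![αs ^ 2 + αc ^ 2, 2 * (αs * αc)] + (2 * (β * μ)) • ![1, 1]
        = ![αs ^ 2 + αc ^ 2 + 2 * β * μ, 2 * (αs * αc + β * μ)] := by
      ext i; fin_cases i <;> simp <;> ring
    rw [hy, ← hu s]
    ext i; fin_cases i <;> simp <;> ring
  refine ODE_solution_unique_affine_Ici (A := (Matrix.toLin' M).toContinuousLinearMap) hv
    (fun s _ => ?_) ?_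
  · rw [hforcing]
    exact hasDerivAt_exp_eigen_sub_smul_affine hdet hMe₁ hMe₂ hξ₁0 hξ₂0
      c₁ c₂ d₁ d₂ (β * μ) lam₀ _ _ _ s
  · rw [hv0]
    simpa using
      (symmetric_hawkes_solution_zero hdet hξ₁ hξ₂ hξ₁0 hξ₂0 hMe₁ hMe₂ hc₁ hc₂ hd₁ hd₂).symm

/-- Explicit solution of the ODE system satisfied by
`(E[λ₁(t)N₁(t)], E[λ₁(t)N₂(t)])` for the symmetric Hawkes model started in its
stationary state (Lemma 3 of the appendix). -/
theorem symmetric_hawkes_intensity_count_cross_moment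
    (αs αc β μ : ℝ)
    (ξ₁ ξ₂ : ℝ) (hξ₁ : ξ₁ = αs - αc - β) (hξ₂ : ξ₂ = αs + αc - β)
    (hξ₁0 : ξ₁ ≠ 0) (hξ₂0 : ξ₂ ≠ 0)
    (M : Matrix (Fin 2) (Fin 2) ℝ) (hM : M = !![αs - β, αc; αc, αs - β])
    (lam₀ : ℝ) (hlam₀ : lam₀ = μ * β / (β - αs - αc))
    (c₁ c₂ d₁ d₂ : ℝ)
    (hc₁ : c₁ = -(lam₀ * (αs - αc) ^ 2) / (4 * ξ₁))
    (hc₂ : c₂ = lam₀ * (αs + αc) ^ 2 / (4 * ξ₂))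
    (hd₁ : d₁ = lam₀ * (αs - αc) * β / (2 * ξ₁ ^ 2))
    (hd₂ : d₂ = -(lam₀ * (αs + αc) * β) / (2 * ξ₂ ^ 2))
    (u : ℝ → Fin 2 → ℝ)
    (hu : ∀ t, u t = (c₁ * Real.exp (2 * ξ₁ * t)) • ![(-1 : ℝ), 1]
          + (c₂ * Real.exp (2 * ξ₂ * t)) • ![(1 : ℝ), 1]
          - (lam₀ / 2) • M⁻¹.mulVec
              ![αs ^ 2 + αc ^ 2 + 2 * β * μ, 2 * (αs * αc + β * μ)])
    (v : ℝ → Fin 2 → ℝ)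
    (hv0 : v 0 = 0)
    (hv : ∀ t ≥ (0 : ℝ), HasDerivAt v
      (M.mulVec (v t)
        + ![αs * lam₀ + u t 0 + β * μ * lam₀ * t,
            αc * lam₀ + u t 1 + β * μ * lam₀ * t]) t) :
    ∀ t ≥ (0 : ℝ),
      v t = (d₁ * Real.exp (ξ₁ * t)) • ![(-1 : ℝ), 1]
          + (d₂ * Real.exp (ξ₂ * t)) • ![(1 : ℝ), 1]
          + (c₁ / ξ₁ * Real.exp (2 * ξ₁ * t)) • ![(-1 : ℝ), 1]
          + (c₂ / ξ₂ * Real.exp (2 * ξ₂ * t)) • ![(1 : ℝ), 1]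
          - lam₀ • ((β * μ * t) • M⁻¹.mulVec ![(1 : ℝ), 1]
              + M⁻¹.mulVec ![αs, αc]
              - (1 / 2 : ℝ) • (M⁻¹ * M⁻¹).mulVec
                  ![αs ^ 2 + αc ^ 2, 2 * (αs * αc)]) :=
  symmetric_hawkes_intensity_count_cross_moment_general αs αc β μ ξ₁ ξ₂ hξ₁ hξ₂ hξ₁0 hξ₂0 M hM lam₀
    c₁ c₂ d₁ d₂ hc₁ hc₂ hd₁ hd₂ u hu v hv0 hv
end

section
/- Let κ₁ ≠ 0 and φ, θ ∈ ℝ. Suppose y, x : ℝ → ℝ are differentiable with y(0) = 0, x(0) = 0, y′(t) = −κ₁·y(t) + φθ·t and x′(t) = −2κ₁·x(t) + 2φ·y(t) for all t ≥ 0. Then for all t ≥ 0: y(t) = φθ·(κ₁t − 1 + e^{−κ₁t})/κ₁², x(t) = φ²θ·(−e^{−2κ₁t} + 4e^{−κ₁t} − 3 + 2κ₁t)/(2κ₁³), and consequently x(t) + 2y(t) + θt = φ²θ·(−e^{−2κ₁t} + 4e^{−κ₁t} − 3 + 2κ₁t)/(2κ₁³) + 2φθ·(κ₁t − 1 + e^{−κ₁t})/κ₁²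 + θt. -/
/-! The closed forms solve the same affine linear ODEs with the same initial values, and the
right-hand sides are Lipschitz in the unknown, so by uniqueness they agree with `y` and `x` on
`[0, ∞)`. The forcing term of the `x`-equation is `y` itself, so `y` is identified first. -/

open Set Real

theorem eqOn_Ici_of_hasDerivAt_linear {E : Type*} [NormedAddCommGroup E] [NormedSpace ℝ E]
    {c : ℝ} {u f g : ℝ → E} {a : ℝ}
    (hf : ∀ s ≥ a, HasDerivAt f (c • f s + u s) s)
    (hg : ∀ s ≥ a, HasDerivAt g (c • g s + u s) s) (ha : f a = g a) :
    EqOn f g (Ici a) := fun t (ht : a ≤ t) =>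
  ODE_solution_unique_of_mem_Icc_right (v := fun s z => c • z + u s) (s := fun _ => univ)
    (fun s _ => ((lipschitzWith_smul c).add (LipschitzWith.const (u s))).lipschitzOnWith)
    (fun s hs => (hf s hs.1).continuousAt.continuousWithinAt)
    (fun s hs => (hf s hs.1).hasDerivWithinAt) (fun _ _ => mem_univ _)
    (fun s hs => (hg s hs.1).continuousAt.continuousWithinAt)
    (fun s hs => (hg s hs.1).hasDerivWithinAt) (fun _ _ => mem_univ _)
    ha ⟨ht, le_rfl⟩

-- The closed forms of the paper's `y(t)` and `x(t)`.
noncomputable def crossMoment (κ₁ φ θ t : ℝ) : ℝ :=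
  φ * θ * (κ₁ * t - 1 + exp (-κ₁ * t)) / κ₁ ^ 2

noncomputable def driftSecondMoment (κ₁ φ θ t : ℝ) : ℝ :=
  φ ^ 2 * θ * (-exp (-2 * κ₁ * t) + 4 * exp (-κ₁ * t) - 3 + 2 * κ₁ * t) / (2 * κ₁ ^ 3)

variable {κ₁ : ℝ} (φ θ : ℝ)

theorem hasDerivAt_crossMoment (hκ₁ : κ₁ ≠ 0) (s : ℝ) :
    HasDerivAt (crossMoment κ₁ φ θ) (-κ₁ * crossMoment κ₁ φ θ s + φ * θ * s) s := by
  have h := ((((hasDerivAt_const_mul (x := s) κ₁).sub_const 1).add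
    (hasDerivAt_const_mul (-κ₁)).exp).const_mul (φ * θ)).div_const (κ₁ ^ 2)
  refine h.congr_deriv ?_
  unfold crossMoment
  field_simp
  ring

theorem hasDerivAt_driftSecondMoment (hκ₁ : κ₁ ≠ 0) (s : ℝ) :
    HasDerivAt (driftSecondMoment κ₁ φ θ)
      (-2 * κ₁ * driftSecondMoment κ₁ φ θ s + 2 * φ * crossMoment κ₁ φ θ s) s := by
  have h := (((((hasDerivAt_const_mul (x := s) (-2 * κ₁)).exp.neg.add
    ((hasDerivAt_const_mul (-κ₁)).exp.const_mul 4)).sub_const 3).add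
    (hasDerivAt_const_mul (2 * κ₁))).const_mul (φ ^ 2 * θ)).div_const (2 * κ₁ ^ 3)
  refine h.congr_deriv ?_
  unfold driftSecondMoment crossMoment
  field_simp
  ring

/-- The variance formula of the diffusion analogy of the symmetric Hawkes model
(Proposition 2): solutions of the ODEs `y' = -κ₁ y + φθt`, `x' = -2κ₁ x + 2φ y`
with zero initial conditions have the stated closed forms, hence
`Var(R_t)·S₀² = x(t) + 2y(t) + θt` has the stated closed form. -/
theorem diffusion_variance_formula
    (κ₁ φ θ : ℝ) (hκ₁ : κ₁ ≠ 0)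
    (y x : ℝ → ℝ) (hy0 : y 0 = 0) (hx0 : x 0 = 0)
    (hy : ∀ t ≥ (0 : ℝ), HasDerivAt y (-κ₁ * y t + φ * θ * t) t)
    (hx : ∀ t ≥ (0 : ℝ), HasDerivAt x (-2 * κ₁ * x t + 2 * φ * y t) t) :
    ∀ t ≥ (0 : ℝ),
      y t = φ * θ * (κ₁ * t - 1 + Real.exp (-κ₁ * t)) / κ₁ ^ 2 ∧
      x t = φ ^ 2 * θ *
          (-Real.exp (-2 * κ₁ * t) + 4 * Real.exp (-κ₁ * t) - 3 + 2 * κ₁ * t)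
          / (2 * κ₁ ^ 3) ∧
      x t + 2 * y t + θ * t
        = φ ^ 2 * θ *
            (-Real.exp (-2 * κ₁ * t) + 4 * Real.exp (-κ₁ * t) - 3 + 2 * κ₁ * t)
            / (2 * κ₁ ^ 3)
          + 2 * φ * θ * (κ₁ * t - 1 + Real.exp (-κ₁ * t)) / κ₁ ^ 2
          + θ * t := by
  have hy_eq : EqOn y (crossMoment κ₁ φ θ) (Ici 0) :=
    eqOn_Ici_of_hasDerivAt_linear (c := -κ₁) (u := fun s => φ * θ * s) hy
      (fun s _ => hasDerivAt_crossMoment φ θ hκ₁ s) (by simp [hy0, crossMoment])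
  have hx_eq : EqOn x (driftSecondMoment κ₁ φ θ) (Ici 0) :=
    eqOn_Ici_of_hasDerivAt_linear (c := -2 * κ₁) (u := fun s => 2 * φ * y s) hx
      (fun s hs => hy_eq hs ▸ hasDerivAt_driftSecondMoment φ θ hκ₁ s)
      (by norm_num [hx0, driftSecondMoment])
  intro t ht
  exact ⟨hy_eq ht, hx_eq ht, by rw [hy_eq ht, hx_eq ht, crossMoment, driftSecondMoment]; ring⟩
end

section
/- Let κ₁ > 0, κ₂ > 0 and γ, ρ, φ, θ ∈ ℝ. Suppose z : ℝ → ℝ is differentiable with z(0) = 0 and z′(t) = −(κ₁ + κ₂)·z(t) + (γρφθ/κ₁²)·(κ₁t − 1 + e^{−κ₁t}) + (γρφθ/κ₂²)·(κ₂t − 1 + e^{−κ₂t}) for all t ≥ 0. Then for all t ≥ 0, z(t) = γθρφ·[−κ₁² − κ₂² − κ₁κ₂ + (κ₁²κ₂ + κ₁κ₂²)·t + (κ₂² + κ₁κ₂)·e^{−κ₁t} + (κ₁² + κ₁κ₂)·e^{−κ₂t} − κ₁κ₂·e^{−(κ₁+κ₂)t}] / (κ₁²κ₂²(κ₁ + κ₂)).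 -/
/-!
The closed form satisfies the same affine ODE `y' = -(κ₁ + κ₂) y + f(t)` and vanishes at `0`;
since the right-hand side is Lipschitz in `y`, Grönwall's uniqueness theorem forces `z` to agree
with it on `[0, ∞)`.
-/

open Set

theorem eqOn_Ici_of_hasDerivAt_smul_add {E : Type*} [NormedAddCommGroup E] [NormedSpace ℝ E]
    {a t₀ : ℝ} {F y₁ y₂ : ℝ → E}
    (h₁ : ∀ t ≥ t₀, HasDerivAt y₁ (a • y₁ t + F t) t)
    (h₂ : ∀ t ≥ t₀, HasDerivAt y₂ (a • y₂ t + F t) t) (h₀ : y₁ t₀ = y₂ t₀) :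
    EqOn y₁ y₂ (Ici t₀) := fun _ ht ↦
  ODE_solution_unique (v := fun s y ↦ a • y + F s)
    (fun s ↦ (lipschitzWith_smul a).add (LipschitzWith.const (F s)))
    (HasDerivAt.continuousOn fun s hs ↦ h₁ s hs.1)
    (fun s hs ↦ (h₁ s hs.1).hasDerivWithinAt)
    (HasDerivAt.continuousOn fun s hs ↦ h₂ s hs.1)
    (fun s hs ↦ (h₂ s hs.1).hasDerivWithinAt) h₀ ⟨ht, le_rfl⟩

noncomputable def diffusionZ (κ₁ κ₂ c t : ℝ) : ℝ :=
  c * (-κ₁ ^ 2 - κ₂ ^ 2 - κ₁ * κ₂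
      + (κ₁ ^ 2 * κ₂ + κ₁ * κ₂ ^ 2) * t
      + (κ₂ ^ 2 + κ₁ * κ₂) * Real.exp (-κ₁ * t)
      + (κ₁ ^ 2 + κ₁ * κ₂) * Real.exp (-κ₂ * t)
      - κ₁ * κ₂ * Real.exp (-(κ₁ + κ₂) * t))
    / (κ₁ ^ 2 * κ₂ ^ 2 * (κ₁ + κ₂))

theorem diffusionZ_zero (κ₁ κ₂ c : ℝ) : diffusionZ κ₁ κ₂ c 0 = 0 := by
  simp only [diffusionZ, mul_zero, Real.exp_zero]
  ring

theorem hasDerivAt_exp_mul (k t : ℝ) :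
    HasDerivAt (fun s ↦ Real.exp (k * s)) (k * Real.exp (k * t)) t := by
  simpa [mul_comm] using ((hasDerivAt_id t).const_mul k).exp

theorem hasDerivAt_diffusionZ {κ₁ κ₂ : ℝ} (hκ₁ : κ₁ ≠ 0) (hκ₂ : κ₂ ≠ 0) (hκ : κ₁ + κ₂ ≠ 0)
    (c t : ℝ) :
    HasDerivAt (diffusionZ κ₁ κ₂ c)
      (-(κ₁ + κ₂) * diffusionZ κ₁ κ₂ c t
        + (c / κ₁ ^ 2 * (κ₁ * t - 1 + Real.exp (-κ₁ * t))
          + c / κ₂ ^ 2 * (κ₂ * t - 1 + Real.exp (-κ₂ * t)))) t := by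
  have hpoly : HasDerivAt (fun s ↦ -κ₁ ^ 2 - κ₂ ^ 2 - κ₁ * κ₂
      + (κ₁ ^ 2 * κ₂ + κ₁ * κ₂ ^ 2) * s
      + (κ₂ ^ 2 + κ₁ * κ₂) * Real.exp (-κ₁ * s)
      + (κ₁ ^ 2 + κ₁ * κ₂) * Real.exp (-κ₂ * s)
      - κ₁ * κ₂ * Real.exp (-(κ₁ + κ₂) * s))
      ((κ₁ ^ 2 * κ₂ + κ₁ * κ₂ ^ 2) * 1
      + (κ₂ ^ 2 + κ₁ * κ₂) * (-κ₁ * Real.exp (-κ₁ * t))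
      + (κ₁ ^ 2 + κ₁ * κ₂) * (-κ₂ * Real.exp (-κ₂ * t))
      - κ₁ * κ₂ * (-(κ₁ + κ₂) * Real.exp (-(κ₁ + κ₂) * t))) t :=
    (((((hasDerivAt_id t).const_mul _).const_add _).add
      ((hasDerivAt_exp_mul _ t).const_mul _)).add
      ((hasDerivAt_exp_mul _ t).const_mul _)).sub
      ((hasDerivAt_exp_mul _ t).const_mul _)
  refine ((hpoly.const_mul c).div_const (κ₁ ^ 2 * κ₂ ^ 2 * (κ₁ + κ₂))).congr_deriv ?_
  rw [diffusionZ, show -(κ₁ + κ₂) * t = -κ₁ * t + -κ₂ * t by ring, Real.exp_add]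
  field_simp
  ring

/-- Lemma in the proof of the third-moment-variation formula (Proposition 3):
closed form of the solution of the ODE satisfied by
`z(t) = E[∫₀ᵗ n_s ds · ∫₀ᵗ V_s ds]` in the diffusion analogy. -/
theorem diffusion_z_formula
    (κ₁ κ₂ γ ρ φ θ : ℝ) (hκ₁ : 0 < κ₁) (hκ₂ : 0 < κ₂)
    (z : ℝ → ℝ) (hz0 : z 0 = 0)
    (hz : ∀ t ≥ (0 : ℝ), HasDerivAt z
      (-(κ₁ + κ₂) * z t
        + γ * ρ * φ * θ / κ₁ ^ 2 * (κ₁ * t - 1 + Real.exp (-κ₁ * t))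
        + γ * ρ * φ * θ / κ₂ ^ 2 * (κ₂ * t - 1 + Real.exp (-κ₂ * t))) t) :
    ∀ t ≥ (0 : ℝ),
      z t = γ * θ * ρ * φ *
          (-κ₁ ^ 2 - κ₂ ^ 2 - κ₁ * κ₂
            + (κ₁ ^ 2 * κ₂ + κ₁ * κ₂ ^ 2) * t
            + (κ₂ ^ 2 + κ₁ * κ₂) * Real.exp (-κ₁ * t)
            + (κ₁ ^ 2 + κ₁ * κ₂) * Real.exp (-κ₂ * t)
            - κ₁ * κ₂ * Real.exp (-(κ₁ + κ₂) * t))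
          / (κ₁ ^ 2 * κ₂ ^ 2 * (κ₁ + κ₂)) := by
  intro t ht
  change z t = diffusionZ κ₁ κ₂ (γ * θ * ρ * φ) t
  rw [show γ * θ * ρ * φ = γ * ρ * φ * θ by ring]
  refine eqOn_Ici_of_hasDerivAt_smul_add (fun s hs ↦ ?_)
    (fun s _ ↦ hasDerivAt_diffusionZ hκ₁.ne' hκ₂.ne' (by positivity) _ s)
    (by rw [hz0, diffusionZ_zero]) ht
  simpa only [smul_eq_mul, add_assoc] using hz s hs
end
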